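/- For every integer n ≥ 0, the (n+1)×(n+1) real symmetric matrix with (i,j)-entry 1/(1 + |i - j|) is positive definite. -/

import Mathlib

/-!
Since `1 / (1 + d) = ∫₀¹ tᵈ dt`, the matrix is the integral over `t ∈ (0, 1)` of the
Kac–Murdock–Szegő matrices `(t ^ |i - j|)`, so it suffices that these are positive definite
for `|t| < 1`. Split a vector as `(a, y)` and put `s = ∑ tⁱ yᵢ`. The quadratic form then
satisfies `Q(a, y) = (a + t s)² + Q(y) - t² s²`, and by induction `s² ≤ Q(y)`. Hence
`Q(a, y) ≥ (a + t s)² + (1 - t²) Q(y)`, which is positive unless `a = 0` and `y = 0`.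
-/

open Finset Matrix Set intervalIntegral MeasureTheory

theorem Nat.cast_dist {R : Type*} [Ring R] [LinearOrder R] [IsStrictOrderedRing R] (i j : ℕ) :
    (Nat.dist i j : R) = |(i : R) - j| := by
  rcases le_total i j with h | h
  · rw [Nat.dist_eq_sub_of_le h, Nat.cast_sub h, abs_sub_comm,
      abs_of_nonneg (sub_nonneg.2 (by exact_mod_cast h))]
  · rw [Nat.dist_eq_sub_of_le_right h, Nat.cast_sub h,
      abs_of_nonneg (sub_nonneg.2 (by exact_mod_cast h))]

theorem one_div_one_add_eq_integral_pow (d : ℕ) :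
    1 / (1 + (d : ℝ)) = ∫ t in (0 : ℝ)..1, t ^ d := by
  simp [integral_pow, add_comm]

theorem Fin.sum_pow_mul_cons {R : Type*} [CommSemiring R] {n : ℕ} (t a : R) (x : Fin n → R) :
    ∑ i : Fin (n + 1), t ^ (i : ℕ) * (Fin.cons a x : Fin (n + 1) → R) i
      = a + t * ∑ i : Fin n, t ^ (i : ℕ) * x i := by
  simp [Fin.sum_univ_succ, pow_succ, Finset.mul_sum, mul_comm, mul_left_comm]

theorem IntervalIntegrable.fun_sum {ι : Type*} (s : Finset ι) {f : ι → ℝ → ℝ} {a b : ℝ}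
    (h : ∀ i ∈ s, IntervalIntegrable (f i) volume a b) :
    IntervalIntegrable (fun t ↦ ∑ i ∈ s, f i t) volume a b := by
  simpa only [Finset.sum_fn] using IntervalIntegrable.sum s h

namespace Matrix

theorem posDef_of_intervalIntegral {ι : Type*} [Fintype ι] {K : ℝ → Matrix ι ι ℝ}
    {a b : ℝ} (hab : a < b) (hK : ∀ i j, IntervalIntegrable (fun t ↦ K t i j) volume a b)
    (hpos : ∀ t ∈ Ioo a b, (K t).PosDef) :
    (of fun i j ↦ ∫ t in a..b, K t i j).PosDef := by
  rw [posDef_iff_dotProduct_mulVec]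
  refine ⟨?_, fun x hx ↦ ?_⟩
  · ext i j
    exact integral_congr_Ioo_of_le hab.le fun t ht ↦ (hpos t ht).isHermitian.apply i j
  have hterm (i j) : IntervalIntegrable (fun t ↦ x i * (K t i j * x j)) volume a b :=
    ((hK i j).mul_const _).const_mul _
  have hrow (i) : IntervalIntegrable (fun t ↦ ∑ j, x i * (K t i j * x j)) volume a b :=
    .fun_sum _ fun j _ ↦ hterm i j
  have hform : star x ⬝ᵥ (of (fun i j ↦ ∫ t in a..b, K t i j) *ᵥ x)
      = ∫ t in a..b, star x ⬝ᵥ (K t *ᵥ x) := by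
    simp only [dotProduct, mulVec, of_apply, star_trivial, Finset.mul_sum]
    rw [integral_finsetSum fun i _ ↦ hrow i]
    refine Finset.sum_congr rfl fun i _ ↦ ?_
    rw [integral_finsetSum fun j _ ↦ hterm i j]
    simp only [intervalIntegral.integral_const_mul, intervalIntegral.integral_mul_const]
  rw [hform]
  refine intervalIntegral_pos_of_pos_on ?_
    (fun t ht ↦ (posDef_iff_dotProduct_mulVec.1 (hpos t ht)).2 hx) hab
  simp only [dotProduct, mulVec, star_trivial, Finset.mul_sum]
  exact .fun_sum _ fun i _ ↦ hrow i

def kacMurdockSzego (n : ℕ) (t : ℝ) : Matrix (Fin n) (Fin n) ℝ :=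
  of fun i j ↦ t ^ Nat.dist i j

theorem kacMurdockSzego_isHermitian (n : ℕ) (t : ℝ) : (kacMurdockSzego n t).IsHermitian := by
  ext i j
  simp [kacMurdockSzego, Nat.dist_comm]

theorem dotProduct_kacMurdockSzego_mulVec_cons {n : ℕ} (t a : ℝ) (x : Fin n → ℝ) :
    (Fin.cons a x : Fin (n + 1) → ℝ) ⬝ᵥ (kacMurdockSzego (n + 1) t *ᵥ Fin.cons a x)
      = a ^ 2 + 2 * t * a * ∑ i : Fin n, t ^ (i : ℕ) * x i
        + x ⬝ᵥ (kacMurdockSzego n t *ᵥ x) := by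
  simp only [dotProduct, mulVec, kacMurdockSzego, of_apply, Fin.sum_univ_succ, Fin.cons_zero,
    Fin.cons_succ, Fin.val_zero, Fin.val_succ, Nat.dist_zero_left, Nat.dist_zero_right,
    Nat.dist_succ_succ, pow_zero, pow_succ, mul_add, mul_sum, sum_add_distrib]
  have hcross :
      ∑ i : Fin n, x i * (t ^ (i : ℕ) * t * a) + ∑ i : Fin n, a * (t ^ (i : ℕ) * t * x i)
      = ∑ i : Fin n, 2 * t * a * (t ^ (i : ℕ) * x i) := by
    rw [← sum_add_distrib]
    exact sum_congr rfl fun i _ ↦ by ring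
  linear_combination hcross

theorem sq_sum_pow_mul_le_dotProduct_kacMurdockSzego_mulVec {n : ℕ} {t : ℝ} (ht : |t| ≤ 1)
    (x : Fin n → ℝ) :
    (∑ i : Fin n, t ^ (i : ℕ) * x i) ^ 2 ≤ x ⬝ᵥ (kacMurdockSzego n t *ᵥ x) := by
  induction n with
  | zero => simp
  | succ n ih =>
    rw [← Fin.cons_self_tail x, Fin.sum_pow_mul_cons, dotProduct_kacMurdockSzego_mulVec_cons]
    have ht2 : t ^ 2 ≤ 1 := (sq_le_one_iff_abs_le_one t).2 ht
    nlinarith [ih (Fin.tail x),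
      mul_nonneg (sub_nonneg.2 ht2) (sq_nonneg (∑ i : Fin n, t ^ (i : ℕ) * Fin.tail x i))]

theorem dotProduct_kacMurdockSzego_mulVec_pos {n : ℕ} {t : ℝ} (ht : |t| < 1) {x : Fin n → ℝ}
    (hx : x ≠ 0) : 0 < x ⬝ᵥ (kacMurdockSzego n t *ᵥ x) := by
  induction n with
  | zero => exact absurd (Subsingleton.elim x 0) hx
  | succ n ih =>
    obtain ⟨a, y, rfl⟩ : ∃ a y, x = Fin.cons a y :=
      ⟨x 0, Fin.tail x, (Fin.cons_self_tail x).symm⟩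
    rw [dotProduct_kacMurdockSzego_mulVec_cons]
    obtain rfl | hy := eq_or_ne y 0
    · have ha : a ≠ 0 := fun ha ↦ hx (ha ▸ cons_zero_zero)
      simp only [Pi.zero_apply, mul_zero, Finset.sum_const_zero, zero_dotProduct, add_zero]
      positivity
    have ht2 : t ^ 2 < 1 := (sq_lt_one_iff_abs_lt_one t).2 ht
    set s := ∑ i : Fin n, t ^ (i : ℕ) * y i
    have hs : s ^ 2 ≤ y ⬝ᵥ (kacMurdockSzego n t *ᵥ y) :=
      sq_sum_pow_mul_le_dotProduct_kacMurdockSzego_mulVec ht.le y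
    nlinarith [sq_nonneg (a + t * s), mul_le_mul_of_nonneg_left hs (sq_nonneg t),
      mul_pos (sub_pos.2 ht2) (ih hy)]

theorem posDef_kacMurdockSzego {n : ℕ} {t : ℝ} (ht : |t| < 1) :
    (kacMurdockSzego n t).PosDef :=
  posDef_iff_dotProduct_mulVec.2
    ⟨kacMurdockSzego_isHermitian n t, fun x hx ↦ by
      simpa using dotProduct_kacMurdockSzego_mulVec_pos ht hx⟩

end Matrix

theorem stmt_1 (n : ℕ) :
    Matrix.PosDef (Matrix.of fun i j : Fin (n + 1) =>
      (1 : ℝ) / (1 + |(i.1 : ℝ) - (j.1 : ℝ)|)) := by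
  have hintegral : (of fun i j : Fin (n + 1) ↦ (1 : ℝ) / (1 + |(i.1 : ℝ) - (j.1 : ℝ)|))
      = of fun i j ↦ ∫ t in (0 : ℝ)..1, kacMurdockSzego (n + 1) t i j := by
    ext i j
    simp only [of_apply, kacMurdockSzego, ← Nat.cast_dist, one_div_one_add_eq_integral_pow]
  rw [hintegral]
  exact posDef_of_intervalIntegral zero_lt_one
    (fun i j ↦ (continuous_pow _).intervalIntegrable 0 1)
    fun t ht ↦ posDef_kacMurdockSzego (abs_lt.2 ⟨by linarith [ht.1], ht.2⟩)
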